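/- Let I = [0, 3π/4], let μ₀ ≥ 1 be an integer and β > 0, and let ω : U → ℝ² be of class C^{μ₀+1} on an open neighborhood U of I, satisfying: for all φ ∈ I and all k ∈ ℤ² \ {0}, max_{0 ≤ μ ≤ μ₀} |(d/dφ)^μ (k·ω(φ))| ≥ β‖k‖. Then there exists C > 0 such that for every γ > 0 and every k ∈ ℤ² \ {0}, the Lebesgue measure of {φ ∈ I : |ω(φ)·k| ≤ γ‖k‖} is at most C γ^{1/μ₀}. -/

import Mathlib

/-! If `|f⁽ⁿ⁾| ≥ c` on an interval, then `{|f| ≤ ε}` has measure at most `4ⁿ (ε/c)^(1/n)`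
(a sublevel-set estimate of Pyartli type). For `n = 1` this is the mean value theorem. For the
induction step, the points where `|f⁽ⁿ⁻¹⁾| < δ` lie in a single interval of length `4δ/c`, and on
each side of it the induction hypothesis applies with `c` replaced by `δ`; the choice
`δ = c (ε/c)^(1/n)` balances the terms.

For the theorem, the derivatives of `k·ω` up to order `μ₀ + 1` are bounded by `M‖k‖` on `I`, so
`I` splits into a number of intervals independent of `k` on each of which a single derivative of
order `≤ μ₀` stays above `β‖k‖/2`. Each piece then contributes `O((γ/β)^(1/μ₀))`. -/

open Real MeasureTheory
open scoped RealInnerProductSpace ENNReal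

noncomputable section

abbrev E2 := EuclideanSpace ℝ (Fin 2)

noncomputable def kv (k : Fin 2 → ℤ) : E2 :=
  EuclideanSpace.single 0 (k 0 : ℝ) + EuclideanSpace.single 1 (k 1 : ℝ)

open Set

def HasDerivChainOn (F : ℕ → ℝ → ℝ) (n : ℕ) (s : Set ℝ) : Prop :=
  ∀ j < n, ∀ x ∈ s, HasDerivAt (F j) (F (j + 1) x) x

theorem HasDerivChainOn.mono {F : ℕ → ℝ → ℝ} {m n : ℕ} {s t : Set ℝ}
    (hF : HasDerivChainOn F n s) (hmn : m ≤ n) (hts : t ⊆ s) : HasDerivChainOn F m t :=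
  fun j hj x hx => hF j (hj.trans_le hmn) x (hts hx)

theorem Convex.mul_abs_sub_le_abs_image_sub {f f' : ℝ → ℝ} {s : Set ℝ} {c : ℝ}
    (hs : Convex ℝ s) (hf : ∀ x ∈ s, HasDerivAt f (f' x) x) (hc : ∀ x ∈ s, c ≤ |f' x|)
    {x y : ℝ} (hx : x ∈ s) (hy : y ∈ s) : c * |y - x| ≤ |f y - f x| := by
  wlog hxy : x < y generalizing x y
  · rcases (not_lt.1 hxy).eq_or_lt with rfl | hyx
    · simp
    · simpa only [abs_sub_comm] using this hy hx hyx
  have hIcc : Icc x y ⊆ s := hs.ordConnected.out hx hy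
  obtain ⟨ξ, hξ, hslope⟩ := exists_hasDerivAt_eq_slope f f' hxy
    (fun t ht => (hf t (hIcc ht)).continuousAt.continuousWithinAt)
    (fun t ht => hf t (hIcc (Ioo_subset_Icc_self ht)))
  have hpos : 0 < y - x := sub_pos.2 hxy
  calc c * |y - x| ≤ |f' ξ| * (y - x) := by
        rw [abs_of_pos hpos]
        exact mul_le_mul_of_nonneg_right (hc ξ (hIcc (Ioo_subset_Icc_self hξ))) hpos.le
    _ = |f y - f x| := by rw [hslope, abs_div, abs_of_pos hpos, div_mul_cancel₀ _ hpos.ne']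

theorem Convex.mul_abs_sub_le_of_le_abs_deriv {f f' : ℝ → ℝ} {s : Set ℝ} {c δ : ℝ}
    (hs : Convex ℝ s) (hf : ∀ x ∈ s, HasDerivAt f (f' x) x) (hc : ∀ x ∈ s, c ≤ |f' x|)
    {x y : ℝ} (hx : x ∈ s) (hy : y ∈ s) (hfx : |f x| ≤ δ) (hfy : |f y| ≤ δ) :
    c * |y - x| ≤ 2 * δ :=
  calc c * |y - x| ≤ |f y - f x| := hs.mul_abs_sub_le_abs_image_sub hf hc hx hy
    _ ≤ |f y| + |f x| := abs_sub _ _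
    _ ≤ 2 * δ := by linarith

theorem volume_le_of_forall_abs_sub_le {s : Set ℝ} {d : ℝ}
    (h : ∀ x ∈ s, ∀ y ∈ s, |x - y| ≤ d) : volume s ≤ ENNReal.ofReal d :=
  (Real.volume_le_diam s).trans (Metric.ediam_le_of_forall_dist_le h)

theorem HasDerivChainOn.volume_sublevel_le {F : ℕ → ℝ → ℝ} {n : ℕ} {s : Set ℝ} {c ε : ℝ}
    (hF : HasDerivChainOn F n s) (hs : Convex ℝ s) (hn : 1 ≤ n) (hc : 0 < c) (hε : 0 < ε)
    (hlow : ∀ x ∈ s, c ≤ |F n x|) :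
    volume {x ∈ s | |F 0 x| ≤ ε} ≤ ENNReal.ofReal (4 ^ n * (ε / c) ^ (n : ℝ)⁻¹) := by
  induction n, hn using Nat.le_induction generalizing s c with
  | base =>
    have hclose : ∀ x ∈ {x ∈ s | |F 0 x| ≤ ε}, ∀ y ∈ {x ∈ s | |F 0 x| ≤ ε},
        |x - y| ≤ 2 * (ε / c) := fun x hx y hy => by
      rw [mul_div_assoc', le_div_iff₀' hc]
      exact hs.mul_abs_sub_le_of_le_abs_deriv (hF 0 one_pos) hlow hy.1 hx.1 hy.2 hx.2
    refine (volume_le_of_forall_abs_sub_le hclose).trans (ENNReal.ofReal_le_ofReal ?_)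
    have : 0 < ε / c := by positivity
    norm_num
    linarith
  | succ n hn ih =>
    set X := (ε / c) ^ ((n : ℝ) + 1)⁻¹ with hXdef
    have hX : 0 < X := by positivity
    have hδ : 0 < c * X := by positivity
    have hεδ : (ε / (c * X)) ^ (n : ℝ)⁻¹ = X := by
      have hr : 0 < ε / c := by positivity
      have hn0 : (n : ℝ) ≠ 0 := by positivity
      have hquot : ε / c / X = (ε / c) ^ (1 - ((n : ℝ) + 1)⁻¹) := by rw [rpow_sub hr, rpow_one]
      rw [← div_div, hquot, ← rpow_mul hr.le]
      congr 1
      field_simp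
      ring
    obtain ⟨u, hu⟩ : ∃ u, ∀ x ∈ s, |F n x| < c * X → |x - u| ≤ 2 * X := by
      by_cases hS : ∃ x₀ ∈ s, |F n x₀| < c * X
      · obtain ⟨x₀, hx₀, hFx₀⟩ := hS
        refine ⟨x₀, fun x hx hFx => ?_⟩
        have := hs.mul_abs_sub_le_of_le_abs_deriv (hF n (lt_add_one n)) hlow hx₀ hx
          hFx₀.le hFx.le
        exact le_of_mul_le_mul_left (this.trans_eq (by ring)) hc
      · push Not at hS
        exact ⟨0, fun x hx hFx => absurd (hS x hx) (not_le.2 hFx)⟩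
    have hside : ∀ t ⊆ s, Convex ℝ t → (∀ x ∈ t, 2 * X < |x - u|) →
        volume {x ∈ t | |F 0 x| ≤ ε} ≤ ENNReal.ofReal (4 ^ n * X) := by
      intro t hts ht hfar
      rw [← hεδ]
      refine ih (hF.mono n.le_succ hts) ht hδ fun x hx => ?_
      by_contra! hFx
      exact (hfar x hx).not_ge (hu x (hts hx) hFx)
    have hcover : {x ∈ s | |F 0 x| ≤ ε} ⊆ {x ∈ s ∩ Iio (u - 2 * X) | |F 0 x| ≤ ε} ∪
        Icc (u - 2 * X) (u + 2 * X) ∪ {x ∈ s ∩ Ioi (u + 2 * X) | |F 0 x| ≤ ε} := by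
      rintro x ⟨hx, hFx⟩
      rcases lt_or_ge x (u - 2 * X) with h | h
      · exact .inl (.inl ⟨⟨hx, h⟩, hFx⟩)
      rcases le_or_gt x (u + 2 * X) with h' | h'
      · exact .inl (.inr ⟨h, h'⟩)
      · exact .inr ⟨⟨hx, h'⟩, hFx⟩
    calc volume {x ∈ s | |F 0 x| ≤ ε}
        ≤ volume {x ∈ s ∩ Iio (u - 2 * X) | |F 0 x| ≤ ε} + volume (Icc (u - 2 * X) (u + 2 * X))
          + volume {x ∈ s ∩ Ioi (u + 2 * X) | |F 0 x| ≤ ε} :=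
        (measure_mono hcover).trans <| (measure_union_le _ _).trans <|
          add_le_add_left (measure_union_le _ _) _
      _ ≤ ENNReal.ofReal (4 ^ n * X) + ENNReal.ofReal (4 * X) + ENNReal.ofReal (4 ^ n * X) := by
        gcongr
        · exact hside _ inter_subset_left (hs.inter (convex_Iio _))
            fun x hx => lt_abs.2 (.inr (by linarith [mem_Iio.1 hx.2]))
        · exact Real.volume_Icc.trans_le (ENNReal.ofReal_le_ofReal (by linarith))
        · exact hside _ inter_subset_left (hs.inter (convex_Ioi _))
            fun x hx => lt_abs.2 (.inl (by linarith [mem_Ioi.1 hx.2]))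
      _ ≤ ENNReal.ofReal (4 ^ (n + 1) * (ε / c) ^ ((n + 1 : ℕ) : ℝ)⁻¹) := by
        rw [← ENNReal.ofReal_add (by positivity) (by positivity),
          ← ENNReal.ofReal_add (by positivity) (by positivity)]
        refine ENNReal.ofReal_le_ofReal ?_
        have : (4 : ℝ) ≤ 4 ^ n := le_self_pow₀ (by norm_num) (by omega)
        push_cast
        rw [pow_succ]
        nlinarith

theorem HasDerivChainOn.volume_sublevel_le_of_exists {F : ℕ → ℝ → ℝ} {n : ℕ} {s : Set ℝ}
    {c M ℓ ε : ℝ} (hF : HasDerivChainOn F (n + 1) s) (hs : Convex ℝ s)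
    (hdiam : ∀ x ∈ s, ∀ y ∈ s, |x - y| ≤ ℓ) (hM : ∀ j ≤ n, ∀ x ∈ s, |F (j + 1) x| ≤ M)
    (hMℓ : 2 * M * ℓ ≤ c) (hlow : ∀ x ∈ s, ∃ μ ≤ n, c ≤ |F μ x|) (hε : 0 < ε)
    (hεc : 2 * ε < c) :
    volume {x ∈ s | |F 0 x| ≤ ε} ≤ ENNReal.ofReal (4 ^ n * (2 * ε / c) ^ (n : ℝ)⁻¹) := by
  rcases s.eq_empty_or_nonempty with rfl | ⟨p, hp⟩
  · simp
  obtain ⟨μ, hμn, hμ⟩ := hlow p hp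
  have hμs : ∀ x ∈ s, c / 2 ≤ |F μ x| := fun x hx => by
    have hM0 : 0 ≤ M := (abs_nonneg _).trans (hM μ hμn p hp)
    have hlip : |F μ p - F μ x| ≤ M * |p - x| := hs.norm_image_sub_le_of_norm_hasDerivWithin_le
      (fun y hy => (hF μ (by omega) y hy).hasDerivWithinAt) (hM μ hμn) hx hp
    calc c / 2 ≤ c - M * ℓ := by linarith
      _ ≤ |F μ p| - M * |p - x| := by gcongr; exact hdiam p hp x hx
      _ ≤ |F μ x| := by linarith [abs_sub_abs_le_abs_sub (F μ p) (F μ x)]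
  rcases Nat.eq_zero_or_pos μ with rfl | hμ0
  · have hempty : {x ∈ s | |F 0 x| ≤ ε} = ∅ :=
      eq_empty_of_forall_notMem fun x hx => by linarith [hμs x hx.1, hx.2]
    simp [hempty]
  have hc : 0 < c := by linarith
  have hr : 2 * ε / c ≤ 1 := (div_le_one hc).2 hεc.le
  calc volume {x ∈ s | |F 0 x| ≤ ε}
      ≤ ENNReal.ofReal (4 ^ μ * (ε / (c / 2)) ^ (μ : ℝ)⁻¹) :=
        (hF.mono (by omega) subset_rfl).volume_sublevel_le hs hμ0 (half_pos hc) hε hμs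
    _ ≤ ENNReal.ofReal (4 ^ n * (2 * ε / c) ^ (n : ℝ)⁻¹) := by
      rw [div_div_eq_mul_div, mul_comm ε]
      refine ENNReal.ofReal_le_ofReal (mul_le_mul (pow_le_pow_right₀ (by norm_num) hμn)
        (rpow_le_rpow_of_exponent_ge (by positivity) hr ?_) (by positivity) (by positivity))
      gcongr

theorem Icc_subset_biUnion_Icc_add_mul {a b ℓ : ℝ} {N : ℕ} (hℓ : 0 < ℓ) (hN : b - a < N * ℓ) :
    Icc a b ⊆ ⋃ i ∈ Finset.range N, Icc (a + i * ℓ) (a + (i + 1) * ℓ) := by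
  intro x hx
  have hq : 0 ≤ (x - a) / ℓ := div_nonneg (by linarith [hx.1]) hℓ.le
  have hfloor := Nat.floor_le hq
  have hlt := Nat.lt_floor_add_one ((x - a) / ℓ)
  rw [le_div_iff₀ hℓ] at hfloor
  rw [div_lt_iff₀ hℓ] at hlt
  simp only [mem_iUnion, Finset.mem_range]
  refine ⟨⌊(x - a) / ℓ⌋₊, ?_, by linarith, by linarith⟩
  refine (Nat.floor_lt hq).2 ((div_lt_iff₀ hℓ).2 ?_)
  linarith [hx.2]

theorem HasDerivChainOn.volume_sublevel_Icc_le {F : ℕ → ℝ → ℝ} {n N : ℕ} {a b c M ℓ ε : ℝ}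
    (hF : HasDerivChainOn F (n + 1) (Icc a b)) (hM : ∀ j ≤ n, ∀ x ∈ Icc a b, |F (j + 1) x| ≤ M)
    (hlow : ∀ x ∈ Icc a b, ∃ μ ≤ n, c ≤ |F μ x|) (hℓ : 0 < ℓ) (hMℓ : 2 * M * ℓ ≤ c)
    (hN : b - a < N * ℓ) (hab : a ≤ b) (hc : 0 < c) (hε : 0 < ε) :
    volume {x ∈ Icc a b | |F 0 x| ≤ ε}
      ≤ ENNReal.ofReal ((N * 4 ^ n + (b - a)) * (2 * ε / c) ^ (n : ℝ)⁻¹) := by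
  set J : ℕ → Set ℝ := fun i => Icc a b ∩ Icc (a + i * ℓ) (a + (i + 1) * ℓ)
  have hr : 0 ≤ (2 * ε / c) ^ (n : ℝ)⁻¹ := by positivity
  rcases lt_or_ge (2 * ε) c with hεc | hcε
  · have hcover : {x ∈ Icc a b | |F 0 x| ≤ ε} ⊆
        ⋃ i ∈ Finset.range N, {x ∈ J i | |F 0 x| ≤ ε} := by
      rintro x ⟨hx, hFx⟩
      have := Icc_subset_biUnion_Icc_add_mul hℓ hN hx
      simp only [mem_iUnion] at this ⊢
      obtain ⟨i, hi, hxi⟩ := this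
      exact ⟨i, hi, ⟨hx, hxi⟩, hFx⟩
    have hpiece : ∀ i, volume {x ∈ J i | |F 0 x| ≤ ε}
        ≤ ENNReal.ofReal (4 ^ n * (2 * ε / c) ^ (n : ℝ)⁻¹) := fun i =>
      (hF.mono le_rfl inter_subset_left).volume_sublevel_le_of_exists
        ((convex_Icc a b).inter (convex_Icc _ _))
        (fun x hx y hy => abs_sub_le_iff.2
          ⟨by linarith [hx.2.2, hy.2.1], by linarith [hx.2.1, hy.2.2]⟩)
        (fun j hj x hx => hM j hj x hx.1) hMℓ (fun x hx => hlow x hx.1) hε hεc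
    calc volume {x ∈ Icc a b | |F 0 x| ≤ ε}
        ≤ ∑ i ∈ Finset.range N, volume {x ∈ J i | |F 0 x| ≤ ε} :=
          (measure_mono hcover).trans (measure_biUnion_finset_le _ _)
      _ ≤ ∑ _i ∈ Finset.range N, ENNReal.ofReal (4 ^ n * (2 * ε / c) ^ (n : ℝ)⁻¹) :=
          Finset.sum_le_sum fun i _ => hpiece i
      _ = ENNReal.ofReal (N * 4 ^ n * (2 * ε / c) ^ (n : ℝ)⁻¹) := by
          rw [Finset.sum_const, Finset.card_range, nsmul_eq_mul, ← ENNReal.ofReal_natCast,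
            ← ENNReal.ofReal_mul (by positivity), mul_assoc]
      _ ≤ ENNReal.ofReal ((N * 4 ^ n + (b - a)) * (2 * ε / c) ^ (n : ℝ)⁻¹) :=
          ENNReal.ofReal_le_ofReal (by nlinarith)
  · have hr1 : 1 ≤ (2 * ε / c) ^ (n : ℝ)⁻¹ := one_le_rpow ((one_le_div hc).2 hcε) (by positivity)
    calc volume {x ∈ Icc a b | |F 0 x| ≤ ε} ≤ volume (Icc a b) := measure_mono (sep_subset _ _)
      _ = ENNReal.ofReal (b - a) := Real.volume_Icc
      _ ≤ ENNReal.ofReal ((N * 4 ^ n + (b - a)) * (2 * ε / c) ^ (n : ℝ)⁻¹) :=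
          ENNReal.ofReal_le_ofReal <| (le_mul_of_one_le_right (sub_nonneg.2 hab) hr1).trans <|
            mul_le_mul_of_nonneg_right (le_add_of_nonneg_left (by positivity)) hr

section IteratedDeriv

variable {𝕜 : Type*} [NontriviallyNormedField 𝕜] {E F : Type*} [NormedAddCommGroup E]
  [NormedSpace 𝕜 E] [NormedAddCommGroup F] [NormedSpace 𝕜 F] {f : 𝕜 → E} {s : Set 𝕜} {m n : ℕ}

theorem ContDiffOn.continuousOn_iteratedDeriv_of_isOpen (hf : ContDiffOn 𝕜 n f s)
    (hs : IsOpen s) (hm : m ≤ n) : ContinuousOn (iteratedDeriv m f) s :=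
  (hf.continuousOn_iteratedDerivWithin (by exact_mod_cast hm) hs.uniqueDiffOn).congr
    fun _ hx => (iteratedDerivWithin_of_isOpen hs hx).symm

theorem ContDiffOn.hasDerivAt_iteratedDeriv_of_isOpen (hf : ContDiffOn 𝕜 n f s)
    (hs : IsOpen s) (hm : m < n) {x : 𝕜} (hx : x ∈ s) :
    HasDerivAt (iteratedDeriv m f) (iteratedDeriv (m + 1) f x) x := by
  have hdiff : DifferentiableOn 𝕜 (iteratedDeriv m f) s :=
    (hf.differentiableOn_iteratedDerivWithin (by exact_mod_cast hm) hs.uniqueDiffOn).congr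
      fun _ hy => (iteratedDerivWithin_of_isOpen hs hy).symm
  rw [iteratedDeriv_succ]
  exact ((hdiff x hx).differentiableAt (hs.mem_nhds hx)).hasDerivAt

theorem ContDiffOn.exists_pos_bound_iteratedDeriv (hf : ContDiffOn 𝕜 n f s) (hs : IsOpen s)
    {K : Set 𝕜} (hK : IsCompact K) (hKs : K ⊆ s) :
    ∃ M, 0 < M ∧ ∀ j ≤ n, ∀ x ∈ K, ‖iteratedDeriv j f x‖ ≤ M := by
  obtain ⟨M, hM⟩ := hK.exists_bound_of_continuousOn
    (f := fun x (j : Fin (n + 1)) => iteratedDeriv j f x) <| continuousOn_pi.2 fun j =>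
      (hf.continuousOn_iteratedDeriv_of_isOpen hs (Nat.lt_succ_iff.1 j.2)).mono hKs
  refine ⟨max M 1, by positivity, fun j hj x hx => ?_⟩
  exact (norm_le_pi_norm (fun i : Fin (n + 1) => iteratedDeriv i f x) ⟨j, by omega⟩).trans
    ((hM x hx).trans (le_max_left _ _))

theorem ContinuousLinearMap.iteratedDeriv_comp_left (g : E →L[𝕜] F) {x : 𝕜}
    (hf : ContDiffAt 𝕜 n f x) {i : ℕ} (hi : i ≤ n) :
    iteratedDeriv i (g ∘ f) x = g (iteratedDeriv i f x) := by
  simp [iteratedDeriv_eq_iteratedFDeriv, g.iteratedFDeriv_comp_left hf (by exact_mod_cast hi)]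

end IteratedDeriv

theorem ContDiffOn.hasDerivChainOn_iteratedDeriv {f : ℝ → ℝ} {n : ℕ} {s t : Set ℝ}
    (hf : ContDiffOn ℝ n f s) (hs : IsOpen s) (hts : t ⊆ s) :
    HasDerivChainOn (fun j => iteratedDeriv j f) n t :=
  fun _ hj _ hx => hf.hasDerivAt_iteratedDeriv_of_isOpen hs hj (hts hx)

theorem abs_iteratedDeriv_inner_le {E : Type*} [NormedAddCommGroup E] [InnerProductSpace ℝ E]
    {ω : ℝ → E} {v : E} {x : ℝ} {n j : ℕ} (hω : ContDiffAt ℝ n ω x) (hj : j ≤ n) :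
    |iteratedDeriv j (fun t => ⟪v, ω t⟫) x| ≤ ‖v‖ * ‖iteratedDeriv j ω x‖ := by
  rw [show (fun t => ⟪v, ω t⟫) = innerSL ℝ v ∘ ω from rfl,
    (innerSL ℝ v).iteratedDeriv_comp_left hω hj, innerSL_apply_apply]
  exact abs_real_inner_le_norm _ _

theorem kv_ne_zero {k : Fin 2 → ℤ} (hk : k ≠ 0) : kv k ≠ 0 := by
  intro h
  apply hk
  funext i
  have := congrArg (· i) h
  fin_cases i <;> simpa [kv] using this

theorem stmt13_general (μ₀ : ℕ) (β : ℝ) (hβ : 0 < β)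
    (U : Set ℝ) (hU : IsOpen U)
    (hIU : Set.Icc (0 : ℝ) (3 * π / 4) ⊆ U)
    (ω : ℝ → E2) (hω : ContDiffOn ℝ (μ₀ + 1 : ℕ) ω U)
    (hlow : ∀ φ ∈ Set.Icc (0 : ℝ) (3 * π / 4), ∀ k : Fin 2 → ℤ, k ≠ 0 →
      ∃ μ : ℕ, μ ≤ μ₀ ∧
        β * ‖kv k‖ ≤ |iteratedDeriv μ (fun t => ⟪kv k, ω t⟫) φ|) :
    ∃ C : ℝ, 0 < C ∧ ∀ γ : ℝ, 0 < γ → ∀ k : Fin 2 → ℤ, k ≠ 0 →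
      volume {φ ∈ Set.Icc (0 : ℝ) (3 * π / 4) | |⟪ω φ, kv k⟫| ≤ γ * ‖kv k‖}
        ≤ ENNReal.ofReal (C * γ ^ (1 / (μ₀ : ℝ))) := by
  obtain ⟨M, hM, hMω⟩ := hω.exists_pos_bound_iteratedDeriv hU isCompact_Icc hIU
  -- On an interval of length `ℓ`, the bound `M‖k‖` on `(k·ω)⁽μ⁺¹⁾` lets `(k·ω)⁽μ⁾` move by at
  -- most `β‖k‖/2`.
  obtain ⟨ℓ, hℓ, hMℓ⟩ : ∃ ℓ, 0 < ℓ ∧ 2 * M * ℓ = β := ⟨β / (2 * M), by positivity, by field_simp⟩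
  obtain ⟨N, hN⟩ := exists_nat_gt (3 * π / 4 / ℓ)
  refine ⟨(N * 4 ^ μ₀ + 3 * π / 4) * (2 / β) ^ (μ₀ : ℝ)⁻¹, by positivity, fun γ hγ k hk => ?_⟩
  have hK : 0 < ‖kv k‖ := norm_pos_iff.2 (kv_ne_zero hk)
  have hf : ContDiffOn ℝ (μ₀ + 1 : ℕ) (fun t => ⟪kv k, ω t⟫) U :=
    (innerSL ℝ (kv k)).contDiff.comp_contDiffOn hω
  have hbound : ∀ j ≤ μ₀, ∀ x ∈ Icc 0 (3 * π / 4),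
      |iteratedDeriv (j + 1) (fun t => ⟪kv k, ω t⟫) x| ≤ M * ‖kv k‖ := fun j hj x hx =>
    (abs_iteratedDeriv_inner_le (hω.contDiffAt (hU.mem_nhds (hIU hx))) (by omega)).trans <| by
      rw [mul_comm]; gcongr; exact hMω (j + 1) (by omega) x hx
  have hvol := (hf.hasDerivChainOn_iteratedDeriv hU hIU).volume_sublevel_Icc_le hbound
    (fun x hx => hlow x hx k hk) hℓ (le_of_eq (by rw [← hMℓ]; ring))
    (by rwa [sub_zero, ← div_lt_iff₀ hℓ]) (by positivity)
    (by positivity) (by positivity : 0 < γ * ‖kv k‖)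
  rw [show 2 * (γ * ‖kv k‖) / (β * ‖kv k‖) = 2 / β * γ by field_simp,
    mul_rpow (by positivity) hγ.le, ← mul_assoc, sub_zero] at hvol
  rw [one_div]
  simpa only [iteratedDeriv_zero, real_inner_comm] using hvol

/-- Rüssmann-type measure estimate: if on `I = [0, 3π/4]` some derivative of order `≤ μ₀` of
`k·ω` is bounded below by `β‖k‖`, then the measure of `{φ ∈ I : |ω(φ)·k| ≤ γ‖k‖}` is
at most `C γ^{1/μ₀}`. -/
theorem stmt13 (μ₀ : ℕ) (hμ₀ : 1 ≤ μ₀) (β : ℝ) (hβ : 0 < β)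
    (U : Set ℝ) (hU : IsOpen U)
    (hIU : Set.Icc (0 : ℝ) (3 * π / 4) ⊆ U)
    (ω : ℝ → E2) (hω : ContDiffOn ℝ (μ₀ + 1 : ℕ) ω U)
    (hlow : ∀ φ ∈ Set.Icc (0 : ℝ) (3 * π / 4), ∀ k : Fin 2 → ℤ, k ≠ 0 →
      ∃ μ : ℕ, μ ≤ μ₀ ∧
        β * ‖kv k‖ ≤ |iteratedDeriv μ (fun t => ⟪kv k, ω t⟫) φ|) :
    ∃ C : ℝ, 0 < C ∧ ∀ γ : ℝ, 0 < γ → ∀ k : Fin 2 → ℤ, k ≠ 0 →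
      volume {φ ∈ Set.Icc (0 : ℝ) (3 * π / 4) | |⟪ω φ, kv k⟫| ≤ γ * ‖kv k‖}
        ≤ ENNReal.ofReal (C * γ ^ (1 / (μ₀ : ℝ))) :=
  stmt13_general μ₀ β hβ U hU hIU ω hω hlow
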